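/- arXiv:1407.8524 — 4 statements merged into one kernel-verified Lean document; each statement's English description precedes it below -/
import Mathlib

section
/- Let θ ∈ (−π, π] with θ ≠ π, γ = exp(iθ/2). Then there do not exist unit vectors φ, ψ ∈ ℂ⁴ such that ⟨ψ|M|φ⟩ = 0 and ⟨φ|M|φ⟩ = ⟨ψ|M|ψ⟩ for all M ∈ 𝔏_θ. -/
open Matrix Complex Finset

def Lset (θ : ℝ) : Set (Matrix (Fin 4) (Fin 4) ℂ) :=
  {M | ∃ a b c d : ℂ,
    M = !![a, b, Complex.exp (Complex.I * θ / 2) * c, d;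
           b, a, d, (starRingEnd ℂ) (Complex.exp (Complex.I * θ / 2)) * c;
           (starRingEnd ℂ) (Complex.exp (Complex.I * θ / 2)) * c, d, a, b;
           d, Complex.exp (Complex.I * θ / 2) * c, b, a]}

/-!
In the common eigenbasis of the permutation matrices carrying `b` and `d`, ℂ⁴ = ℂ² ⊗ ℂ² and
every element of `Lset θ` reads `a (1 ⊗ 1) + d (Z ⊗ 1) + b (Z ⊗ Z) + c (1 ⊗ H)`, where
`H = cos (θ/2) Z + sin (θ/2) Y`. Split `ψ = (v₁, v₂)` and `φ = (w₁, w₂)` accordingly. The conditions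
for `1` and `Z ⊗ 1` say that in each block `w_j ⊥ v_j` and `‖w_j‖ = ‖v_j‖`, so `{v_j, w_j}` is an
orthogonal basis of ℂ² with equal lengths, and `tr (Z H) ‖v_j‖⁴` is the sum of products of the
entries of `Z` and `H` in that basis. The conditions for `Z ⊗ Z` and `1 ⊗ H` make the `Z`-entries
of the two blocks equal and the `H`-entries opposite, so `tr (Z H) (‖v₁‖⁴ + ‖v₂‖⁴) = 0`. As
`tr (Z H) = 2 cos (θ/2) ≠ 0` for `θ ∈ (-π, π)`, this forces `ψ = 0`.
-/

open scoped ComplexOrder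

/-- `spinFlip v` spans the orthogonal complement of `v` in ℂ² and has the same length. -/
def spinFlip (v : Fin 2 → ℂ) : Fin 2 → ℂ := ![-star (v 1), star (v 0)]

lemma exists_eq_smul_spinFlip {v w : Fin 2 → ℂ} (hvw : star v ⬝ᵥ w = 0)
    (hw : star w ⬝ᵥ w = star v ⬝ᵥ v) : ∃ μ : ℂ, star μ * μ = 1 ∧ w = μ • spinFlip v := by
  by_cases hv : v = 0
  · rw [hv, dotProduct_zero, dotProduct_star_self_eq_zero] at hw
    exact ⟨1, by simp, by ext i; fin_cases i <;> simp [hw, hv, spinFlip]⟩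
  have hρ : star v ⬝ᵥ v ≠ 0 := dotProduct_star_self_eq_zero.not.mpr hv
  simp only [dotProduct, Fin.sum_univ_two, Pi.star_apply] at hρ hvw hw
  refine ⟨(v 0 * w 1 - v 1 * w 0) / (star (v 0) * v 0 + star (v 1) * v 1), ?_, ?_⟩
  · rw [star_div₀, div_mul_div_comm, div_eq_one_iff_eq (mul_ne_zero (star_ne_zero.mpr hρ) hρ)]
    simp only [star_sub, star_mul', star_add, star_star]
    -- Lagrange's identity: |v₀w₁ - v₁w₀|² + |⟨v, w⟩|² = ‖v‖²‖w‖²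
    linear_combination (-(v 0 * star (w 0) + v 1 * star (w 1))) * hvw
      + (star (v 0) * v 0 + star (v 1) * v 1) * hw
  · ext i
    fin_cases i <;>
      simp only [spinFlip, Pi.smul_apply, smul_eq_mul, Fin.zero_eta, Fin.mk_one,
        Matrix.cons_val_zero, Matrix.cons_val_one] <;>
      rw [div_mul_eq_mul_div, eq_div_iff hρ]
    · linear_combination (v 0) * hvw
    · linear_combination (v 1) * hvw

section TraceFormulas

variable (A B : Matrix (Fin 2) (Fin 2) ℂ) (v : Fin 2 → ℂ)

lemma trace_mul_dotProduct_star_self :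
    A.trace * (star v ⬝ᵥ v) = star v ⬝ᵥ A *ᵥ v + star (spinFlip v) ⬝ᵥ A *ᵥ spinFlip v := by
  simp only [spinFlip, trace_fin_two, dotProduct, mulVec, Fin.sum_univ_two, Pi.star_apply,
    Matrix.cons_val_zero, Matrix.cons_val_one, star_neg, star_star]
  ring

lemma trace_mul_mul_dotProduct_star_self_sq :
    (A * B).trace * (star v ⬝ᵥ v) ^ 2 =
      (star v ⬝ᵥ A *ᵥ v) * (star v ⬝ᵥ B *ᵥ v)
      + (star v ⬝ᵥ A *ᵥ spinFlip v) * (star (spinFlip v) ⬝ᵥ B *ᵥ v)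
      + (star (spinFlip v) ⬝ᵥ A *ᵥ v) * (star v ⬝ᵥ B *ᵥ spinFlip v)
      + (star (spinFlip v) ⬝ᵥ A *ᵥ spinFlip v) * (star (spinFlip v) ⬝ᵥ B *ᵥ spinFlip v) := by
  simp only [spinFlip, trace_fin_two, dotProduct, mulVec, Fin.sum_univ_two, Pi.star_apply,
    Matrix.mul_apply, Matrix.cons_val_zero, Matrix.cons_val_one, star_neg, star_star]
  ring

variable {A B}

/-! For `w ⊥ v` with `‖w‖ = ‖v‖`, `{v, w}` is an orthogonal basis of ℂ² with equal lengths, and the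
following are the trace formulas in that basis. -/

lemma trace_mul_dotProduct_star_self_of_orthogonal {v w : Fin 2 → ℂ} (hvw : star v ⬝ᵥ w = 0)
    (hw : star w ⬝ᵥ w = star v ⬝ᵥ v) :
    A.trace * (star v ⬝ᵥ v) = star v ⬝ᵥ A *ᵥ v + star w ⬝ᵥ A *ᵥ w := by
  obtain ⟨μ, hμ, rfl⟩ := exists_eq_smul_spinFlip hvw hw
  simp only [mulVec_smul, dotProduct_smul, star_smul, smul_dotProduct, smul_eq_mul]
  linear_combination trace_mul_dotProduct_star_self A v
    - (star (spinFlip v) ⬝ᵥ A *ᵥ spinFlip v) * hμ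

lemma trace_mul_mul_dotProduct_star_self_sq_of_orthogonal {v w : Fin 2 → ℂ}
    (hvw : star v ⬝ᵥ w = 0) (hw : star w ⬝ᵥ w = star v ⬝ᵥ v) :
    (A * B).trace * (star v ⬝ᵥ v) ^ 2 =
      (star v ⬝ᵥ A *ᵥ v) * (star v ⬝ᵥ B *ᵥ v) + (star v ⬝ᵥ A *ᵥ w) * (star w ⬝ᵥ B *ᵥ v)
      + (star w ⬝ᵥ A *ᵥ v) * (star v ⬝ᵥ B *ᵥ w) + (star w ⬝ᵥ A *ᵥ w) * (star w ⬝ᵥ B *ᵥ w) := by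
  obtain ⟨μ, hμ, rfl⟩ := exists_eq_smul_spinFlip hvw hw
  simp only [mulVec_smul, dotProduct_smul, star_smul, smul_dotProduct, smul_eq_mul]
  linear_combination trace_mul_mul_dotProduct_star_self_sq A B v
    - ((star v ⬝ᵥ A *ᵥ spinFlip v) * (star (spinFlip v) ⬝ᵥ B *ᵥ v)
      + (star (spinFlip v) ⬝ᵥ A *ᵥ v) * (star v ⬝ᵥ B *ᵥ spinFlip v)
      + (1 + star μ * μ) * (star (spinFlip v) ⬝ᵥ A *ᵥ spinFlip v)
        * (star (spinFlip v) ⬝ᵥ B *ᵥ spinFlip v)) * hμ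

end TraceFormulas

lemma Matrix.IsHermitian.star_dotProduct_mulVec_comm {n : Type*} [Fintype n]
    {A : Matrix n n ℂ} (hA : A.IsHermitian) (v w : n → ℂ) :
    star w ⬝ᵥ A *ᵥ v = star (star v ⬝ᵥ A *ᵥ w) := by
  rw [← star_dotProduct_star, star_star, star_mulVec, ← dotProduct_mulVec, hA.eq]

/-- The hypotheses say that `1 ⊕ 1`, `1 ⊕ -1`, `A ⊕ -A` and `B ⊕ B` on ℂ² ⊕ ℂ² have scalar
compressions to the span of `(v₁, v₂)` and `(w₁, w₂)`. -/
theorem eq_zero_of_compression_scalar {A B : Matrix (Fin 2) (Fin 2) ℂ}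
    (hA : A.IsHermitian) (hB : B.IsHermitian) (hA₀ : A.trace = 0) (hB₀ : B.trace = 0)
    (hAB : (A * B).trace ≠ 0) {v₁ v₂ w₁ w₂ : Fin 2 → ℂ}
    (hvw₁ : star v₁ ⬝ᵥ w₁ = 0) (hvw₂ : star v₂ ⬝ᵥ w₂ = 0)
    (hw₁ : star w₁ ⬝ᵥ w₁ = star v₁ ⬝ᵥ v₁) (hw₂ : star w₂ ⬝ᵥ w₂ = star v₂ ⬝ᵥ v₂)
    (hA_off : star v₁ ⬝ᵥ A *ᵥ w₁ = star v₂ ⬝ᵥ A *ᵥ w₂)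
    (hA_diag : star w₁ ⬝ᵥ A *ᵥ w₁ - star w₂ ⬝ᵥ A *ᵥ w₂
      = star v₁ ⬝ᵥ A *ᵥ v₁ - star v₂ ⬝ᵥ A *ᵥ v₂)
    (hB_off : star v₁ ⬝ᵥ B *ᵥ w₁ + star v₂ ⬝ᵥ B *ᵥ w₂ = 0)
    (hB_diag : star w₁ ⬝ᵥ B *ᵥ w₁ + star w₂ ⬝ᵥ B *ᵥ w₂
      = star v₁ ⬝ᵥ B *ᵥ v₁ + star v₂ ⬝ᵥ B *ᵥ v₂) :
    v₁ = 0 ∧ v₂ = 0 := by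
  have tA₁ := trace_mul_dotProduct_star_self_of_orthogonal (A := A) hvw₁ hw₁
  have tA₂ := trace_mul_dotProduct_star_self_of_orthogonal (A := A) hvw₂ hw₂
  have tB₁ := trace_mul_dotProduct_star_self_of_orthogonal (A := B) hvw₁ hw₁
  have tB₂ := trace_mul_dotProduct_star_self_of_orthogonal (A := B) hvw₂ hw₂
  rw [hA₀, zero_mul] at tA₁ tA₂
  rw [hB₀, zero_mul] at tB₁ tB₂
  have g₁ := trace_mul_mul_dotProduct_star_self_sq_of_orthogonal (A := A) (B := B) hvw₁ hw₁
  have g₂ := trace_mul_mul_dotProduct_star_self_sq_of_orthogonal (A := A) (B := B) hvw₂ hw₂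
  rw [hA.star_dotProduct_mulVec_comm v₁ w₁, hB.star_dotProduct_mulVec_comm v₁ w₁] at g₁
  rw [hA.star_dotProduct_mulVec_comm v₂ w₂, hB.star_dotProduct_mulVec_comm v₂ w₂] at g₂
  have hA_off' := congrArg star hA_off
  have hB_off' : star (star v₁ ⬝ᵥ B *ᵥ w₁) + star (star v₂ ⬝ᵥ B *ᵥ w₂) = 0 := by
    rw [← star_add, hB_off, star_zero]
  have hP : star v₁ ⬝ᵥ A *ᵥ v₁ = star v₂ ⬝ᵥ A *ᵥ v₂ := by
    linear_combination -(hA_diag + tA₁ - tA₂) / 2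
  have hQ : star v₁ ⬝ᵥ B *ᵥ v₁ + star v₂ ⬝ᵥ B *ᵥ v₂ = 0 := by
    linear_combination -(hB_diag + tB₁ + tB₂) / 2
  have key : (A * B).trace * ((star v₁ ⬝ᵥ v₁) ^ 2 + (star v₂ ⬝ᵥ v₂) ^ 2) = 0 := by
    linear_combination g₁ + g₂ + 2 * (star v₁ ⬝ᵥ A *ᵥ v₁) * hQ - 2 * (star v₂ ⬝ᵥ B *ᵥ v₂) * hP
      - (star w₁ ⬝ᵥ A *ᵥ w₁) * tB₁ + (star v₁ ⬝ᵥ B *ᵥ v₁) * tA₁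
      - (star w₂ ⬝ᵥ A *ᵥ w₂) * tB₂ + (star v₂ ⬝ᵥ B *ᵥ v₂) * tA₂
      + (star v₁ ⬝ᵥ A *ᵥ w₁) * hB_off' - star (star v₂ ⬝ᵥ B *ᵥ w₂) * hA_off
      + star (star v₁ ⬝ᵥ A *ᵥ w₁) * hB_off - (star v₂ ⬝ᵥ B *ᵥ w₂) * hA_off'
  have hsq := (add_eq_zero_iff_of_nonneg (pow_nonneg (dotProduct_star_self_nonneg v₁) 2)
    (pow_nonneg (dotProduct_star_self_nonneg v₂) 2)).mp ((mul_eq_zero.mp key).resolve_left hAB)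
  simpa only [pow_eq_zero_iff two_ne_zero, dotProduct_star_self_eq_zero] using hsq

def pauliZ : Matrix (Fin 2) (Fin 2) ℂ := !![1, 0; 0, -1]

/-- `cos (θ/2) σ_z + sin (θ/2) σ_y`. -/
noncomputable def tiltedPauli (θ : ℝ) : Matrix (Fin 2) (Fin 2) ℂ :=
  !![(Real.cos (θ / 2) : ℂ), -I * Real.sin (θ / 2); I * Real.sin (θ / 2), -(Real.cos (θ / 2) : ℂ)]

lemma pauliZ_isHermitian : pauliZ.IsHermitian := by
  ext i j; fin_cases i <;> fin_cases j <;> simp [pauliZ]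

lemma tiltedPauli_isHermitian (θ : ℝ) : (tiltedPauli θ).IsHermitian := by
  ext i j
  fin_cases i <;> fin_cases j <;> simp [tiltedPauli, -Complex.ofReal_cos, -Complex.ofReal_sin]

lemma trace_pauliZ : pauliZ.trace = 0 := by simp [pauliZ, trace_fin_two]

lemma trace_tiltedPauli (θ : ℝ) : (tiltedPauli θ).trace = 0 := by
  simp [tiltedPauli, trace_fin_two]

lemma trace_pauliZ_mul_tiltedPauli (θ : ℝ) :
    (pauliZ * tiltedPauli θ).trace = 2 * Real.cos (θ / 2) := by
  simp [pauliZ, tiltedPauli, trace_fin_two]; ring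

/-- `plusBlock u` and `minusBlock u` are the coordinates of `u` (scaled by 2) in the common
eigenbasis of the permutation matrices carrying `b` and `d` in `Lset`, on the eigenspaces of the
`d`-matrix for `+1` and `-1`. -/
def plusBlock (u : Fin 4 → ℂ) : Fin 2 → ℂ := ![u 0 + u 1 + u 2 + u 3, u 0 - u 1 - u 2 + u 3]

def minusBlock (u : Fin 4 → ℂ) : Fin 2 → ℂ := ![u 0 - u 1 + u 2 - u 3, u 0 + u 1 - u 2 - u 3]

/-- Four times the sesquilinear form of the element of `Lset θ` with parameters `a b c d`,
in block coordinates. -/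
noncomputable def blockForm (θ : ℝ) (a b c d : ℂ) (u v : Fin 4 → ℂ) : ℂ :=
  (a + d) * (star (plusBlock u) ⬝ᵥ plusBlock v) + (a - d) * (star (minusBlock u) ⬝ᵥ minusBlock v)
    + b * (star (plusBlock u) ⬝ᵥ pauliZ *ᵥ plusBlock v
      - star (minusBlock u) ⬝ᵥ pauliZ *ᵥ minusBlock v)
    + c * (star (plusBlock u) ⬝ᵥ tiltedPauli θ *ᵥ plusBlock v
      + star (minusBlock u) ⬝ᵥ tiltedPauli θ *ᵥ minusBlock v)

lemma exists_mem_Lset_blockForm (θ : ℝ) (a b c d : ℂ) :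
    ∃ M ∈ Lset θ, ∀ u v : Fin 4 → ℂ, 4 * (star u ⬝ᵥ M *ᵥ v) = blockForm θ a b c d u v := by
  refine ⟨_, ⟨a, b, c, d, rfl⟩, fun u v => ?_⟩
  have hγ : Complex.exp (Complex.I * θ / 2) = Real.cos (θ / 2) + Real.sin (θ / 2) * I := by
    rw [Complex.ofReal_cos, Complex.ofReal_sin, ← Complex.exp_mul_I]
    push_cast; ring_nf
  simp only [blockForm, plusBlock, minusBlock, pauliZ, tiltedPauli, hγ, dotProduct, mulVec,
    Fin.sum_univ_four, Fin.sum_univ_two, Pi.star_apply, RCLike.star_def, map_add, map_sub, map_mul,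
    conj_ofReal, conj_I, mul_neg, neg_mul, of_apply, cons_val', cons_val_fin_one, Fin.isValue,
    cons_val_zero, cons_val_one, Matrix.cons_val]
  ring

lemma eq_zero_of_plusBlock_eq_zero_of_minusBlock_eq_zero {u : Fin 4 → ℂ}
    (h₁ : plusBlock u = 0) (h₂ : minusBlock u = 0) : u = 0 := by
  have e₀ := congrFun h₁ 0
  have e₁ := congrFun h₁ 1
  have e₂ := congrFun h₂ 0
  have e₃ := congrFun h₂ 1
  simp only [plusBlock, minusBlock, Fin.isValue, cons_val_zero, cons_val_one, Pi.zero_apply]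
    at e₀ e₁ e₂ e₃
  ext i
  fin_cases i <;> simp only [Fin.reduceFinMk, Fin.zero_eta, Fin.mk_one, Fin.isValue, Pi.zero_apply]
  · linear_combination (e₀ + e₁ + e₂ + e₃) / 4
  · linear_combination (e₀ - e₁ - e₂ + e₃) / 4
  · linear_combination (e₀ - e₁ + e₂ - e₃) / 4
  · linear_combination (e₀ + e₁ - e₂ - e₃) / 4

theorem stmt_8 (θ : ℝ) (hθ : θ ∈ Set.Ioc (-Real.pi) Real.pi) (hne : θ ≠ Real.pi) :
    ¬ ∃ φ ψ : Fin 4 → ℂ, (∑ i, ‖φ i‖ ^ 2 = 1) ∧ (∑ i, ‖ψ i‖ ^ 2 = 1) ∧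
      ∀ M ∈ Lset θ, star ψ ⬝ᵥ M.mulVec φ = 0 ∧
        star φ ⬝ᵥ M.mulVec φ = star ψ ⬝ᵥ M.mulVec ψ := by
  rintro ⟨φ, ψ, -, hψ, h⟩
  have hcos : Real.cos (θ / 2) ≠ 0 := (Real.cos_pos_of_mem_Ioo
    ⟨by linarith [hθ.1], by linarith [lt_of_le_of_ne hθ.2 hne]⟩).ne'
  have hF (a b c d : ℂ) : blockForm θ a b c d ψ φ = 0 ∧
      blockForm θ a b c d φ φ = blockForm θ a b c d ψ ψ := by
    obtain ⟨M, hM, hMF⟩ := exists_mem_Lset_blockForm θ a b c d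
    obtain ⟨hoff, hdiag⟩ := h M hM
    rw [← hMF, ← hMF, ← hMF, hoff, hdiag, mul_zero]
    exact ⟨rfl, rfl⟩
  obtain ⟨oa, da⟩ := hF 1 0 0 0
  obtain ⟨ob, db⟩ := hF 0 1 0 0
  obtain ⟨oc, dc⟩ := hF 0 0 1 0
  obtain ⟨od, dd⟩ := hF 0 0 0 1
  simp only [blockForm] at oa da ob db oc dc od dd
  obtain ⟨h₁, h₂⟩ := eq_zero_of_compression_scalar (v₁ := plusBlock ψ) (v₂ := minusBlock ψ)
    (w₁ := plusBlock φ) (w₂ := minusBlock φ) pauliZ_isHermitian (tiltedPauli_isHermitian θ)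
    trace_pauliZ (trace_tiltedPauli θ)
    (by rw [trace_pauliZ_mul_tiltedPauli]; exact mul_ne_zero two_ne_zero (ofReal_ne_zero.mpr hcos))
    (by linear_combination (oa + od) / 2) (by linear_combination (oa - od) / 2)
    (by linear_combination (da + dd) / 2) (by linear_combination (da - dd) / 2)
    (by linear_combination ob) (by linear_combination db)
    (by linear_combination oc) (by linear_combination dc)
  simp [eq_zero_of_plusBlock_eq_zero_of_minusBlock_eq_zero h₁ h₂] at hψ
end

section
/- There does not exist a triple of pairwise orthogonal unit vectors φ₁, φ₂, φ₃ in ℂ⁴ such that for all i ≠ j and all M ∈ 𝔏_π, ⟨φ_j|M|φ_i⟩ = 0 and ⟨φ_i|M|φ_i⟩ = ⟨φ_j|M|φ_j⟩. -/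
open Matrix Complex Finset

/-- The subspace `𝔏_π` of `M₄(ℂ)`. -/
def LsetPi : Set (Matrix (Fin 4) (Fin 4) ℂ) :=
  {M | ∃ a b c d : ℂ,
    M = !![a, b, Complex.I * c, d;
           b, a, d, -Complex.I * c;
           -Complex.I * c, d, a, b;
           d, Complex.I * c, b, a]}

/-!
Test the conditions against `swapPairs ∈ 𝔏_π` (`b = 1`, `a = c = d = 0`), the permutation
matrix of `(0 1)(2 3)`. They on `φ` say that the columns of `Φ = [φ₁ φ₂ φ₃]` form an
isometry whose compression `Φᴴ swapPairs Φ` is a scalar `β • 1`, so `⟨v, swapPairs v⟩ = β ‖v‖²`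
on the three-dimensional range of `Φ`. The eigenspaces of `swapPairs` for `1` and `-1` are
two-dimensional, so both meet that range nontrivially, forcing `β = 1` and `β = -1`.
-/

namespace Matrix

variable {m n K : Type*} [Fintype m]

theorem exists_ne_zero_mulVec_eq_zero_of_card_lt [Fintype n] [Field K] (M : Matrix m n K)
    (h : Fintype.card m < Fintype.card n) : ∃ c ≠ 0, M *ᵥ c = 0 := by
  have hker : LinearMap.ker M.mulVecLin ≠ ⊥ :=
    LinearMap.ker_ne_bot_of_finrank_lt (by simpa using h)
  obtain ⟨c, hc, hc0⟩ := (Submodule.ne_bot_iff _).mp hker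
  exact ⟨c, hc0, hc⟩

section StarRing

variable [CommRing K] [StarRing K]

theorem conjTranspose_of_transpose_mul_mul_apply (φ : n → m → K) (A : Matrix m m K) (i j : n) :
    ((of φ)ᵀᴴ * A * (of φ)ᵀ) i j = star (φ i) ⬝ᵥ A *ᵥ φ j := by
  simp only [Matrix.mul_apply, dotProduct, mulVec, Finset.mul_sum, Finset.sum_mul, mul_assoc,
    conjTranspose_apply, transpose_apply, of_apply, Pi.star_apply]
  exact Finset.sum_comm

variable [Fintype n]

theorem star_mulVec_dotProduct_mulVec_mulVec (Φ : Matrix m n K) (A : Matrix m m K) (c : n → K) :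
    star (Φ *ᵥ c) ⬝ᵥ A *ᵥ (Φ *ᵥ c) = star c ⬝ᵥ (Φᴴ * A * Φ) *ᵥ c := by
  rw [star_mulVec, ← dotProduct_mulVec, mulVec_mulVec, mulVec_mulVec, Matrix.mul_assoc]

end StarRing

theorem eq_of_conjTranspose_mul_mul_eq_smul_one [DecidableEq m] [DecidableEq n] [Fintype n]
    [Field K] [StarRing K] [PartialOrder K] [StarOrderedRing K] {Φ : Matrix m n K} {A : Matrix m m K} {β μ : K}
    (hΦ : Φᴴ * Φ = 1) (hA : Φᴴ * A * Φ = β • 1) {c : n → K} (hc : c ≠ 0)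
    (hμ : A *ᵥ (Φ *ᵥ c) = μ • (Φ *ᵥ c)) : β = μ := by
  have hnorm : star (Φ *ᵥ c) ⬝ᵥ Φ *ᵥ c = star c ⬝ᵥ c := by
    simpa [hΦ] using star_mulVec_dotProduct_mulVec_mulVec Φ 1 c
  have hquad := star_mulVec_dotProduct_mulVec_mulVec Φ A c
  rw [hA, hμ, dotProduct_smul, hnorm] at hquad
  simp only [smul_mulVec, one_mulVec, dotProduct_smul, smul_eq_mul] at hquad
  exact mul_right_cancel₀ (dotProduct_star_self_eq_zero.not.mpr hc) hquad.symm
end Matrix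

theorem star_dotProduct_self_eq_sum_norm_sq {n : Type*} [Fintype n] (v : n → ℂ) :
    star v ⬝ᵥ v = ((∑ k, ‖v k‖ ^ 2 : ℝ) : ℂ) := by
  simp [dotProduct, Complex.conj_mul']

def swapPairs : Matrix (Fin 4) (Fin 4) ℂ :=
  !![0, 1, 0, 0;
     1, 0, 0, 0;
     0, 0, 0, 1;
     0, 0, 1, 0]

theorem swapPairs_mem_LsetPi : swapPairs ∈ LsetPi :=
  ⟨0, 1, 0, 0, by ext i j; fin_cases i <;> fin_cases j <;> simp [swapPairs]⟩

theorem swapPairs_mulVec_eq_smul {μ : ℂ} (hμ : μ ^ 2 = 1) {x : Fin 4 → ℂ}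
    (hx : !![μ, -1, 0, 0; 0, 0, μ, -1] *ᵥ x = 0) : swapPairs *ᵥ x = μ • x := by
  have h1 : μ * x 0 = x 1 := by
    simpa [mulVec, dotProduct, Fin.sum_univ_four, ← sub_eq_add_neg, sub_eq_zero]
      using congrFun hx 0
  have h3 : μ * x 2 = x 3 := by
    simpa [mulVec, dotProduct, Fin.sum_univ_four, ← sub_eq_add_neg, sub_eq_zero]
      using congrFun hx 1
  ext k
  fin_cases k <;> simp [swapPairs, mulVec, dotProduct, Fin.sum_univ_four, ← h1, ← h3,
    ← mul_assoc, ← sq, hμ]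

theorem exists_ne_zero_swapPairs_mulVec_eq_smul {μ : ℂ} (hμ : μ ^ 2 = 1)
    (Φ : Matrix (Fin 4) (Fin 3) ℂ) : ∃ c ≠ 0, swapPairs *ᵥ (Φ *ᵥ c) = μ • (Φ *ᵥ c) := by
  obtain ⟨c, hc, hker⟩ :=
    exists_ne_zero_mulVec_eq_zero_of_card_lt (!![μ, -1, 0, 0; 0, 0, μ, -1] * Φ) (by simp)
  exact ⟨c, hc, swapPairs_mulVec_eq_smul hμ (by rwa [mulVec_mulVec])⟩

open scoped ComplexOrder in
theorem conjTranspose_mul_swapPairs_mul_ne_smul_one {Φ : Matrix (Fin 4) (Fin 3) ℂ}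
    (hΦ : Φᴴ * Φ = 1) (β : ℂ) : Φᴴ * swapPairs * Φ ≠ β • 1 := by
  intro hβ
  have eq_of_sq_eq_one {μ : ℂ} (hμ : μ ^ 2 = 1) : β = μ := by
    obtain ⟨c, hc, hμc⟩ := exists_ne_zero_swapPairs_mulVec_eq_smul hμ Φ
    exact eq_of_conjTranspose_mul_mul_eq_smul_one hΦ hβ hc hμc
  have h1 := eq_of_sq_eq_one (μ := 1) (by norm_num)
  have h2 := eq_of_sq_eq_one (μ := -1) (by norm_num)
  norm_num [h1] at h2

theorem stmt_9 :
    ¬ ∃ φ : Fin 3 → Fin 4 → ℂ,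
      (∀ i, ∑ k, ‖φ i k‖ ^ 2 = 1) ∧
      (∀ i j, i ≠ j → star (φ j) ⬝ᵥ (φ i) = 0) ∧
      (∀ i j, i ≠ j → ∀ M ∈ LsetPi,
        star (φ j) ⬝ᵥ M.mulVec (φ i) = 0 ∧
        star (φ i) ⬝ᵥ M.mulVec (φ i) = star (φ j) ⬝ᵥ M.mulVec (φ j)) := by
  rintro ⟨φ, hnorm, horth, hM⟩
  set β := star (φ 0) ⬝ᵥ swapPairs *ᵥ φ 0
  have hdiag (i : Fin 3) : star (φ i) ⬝ᵥ swapPairs *ᵥ φ i = β := by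
    by_cases hi : i = 0
    · rw [hi]
    · exact (hM i 0 hi _ swapPairs_mem_LsetPi).2
  refine conjTranspose_mul_swapPairs_mul_ne_smul_one (Φ := (of φ)ᵀ) ?_ β ?_
  · ext i j
    rw [← Matrix.mul_one (of φ)ᵀᴴ, conjTranspose_of_transpose_mul_mul_apply, one_mulVec,
      one_apply]
    split_ifs with h
    · rw [h, star_dotProduct_self_eq_sum_norm_sq, hnorm, Complex.ofReal_one]
    · exact horth j i (Ne.symm h)
  · ext i j
    rw [conjTranspose_of_transpose_mul_mul_apply, Matrix.smul_apply, one_apply]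
    split_ifs with h
    · rw [h, hdiag, smul_eq_mul, mul_one]
    · rw [smul_zero]
      exact (hM j i (Ne.symm h) _ swapPairs_mem_LsetPi).1
end

section
/- Let θ₁,…,θ_n ∈ (−π,π] satisfy θ₁ + ⋯ + θ_n ≡ π (mod 2π), and set γ_k = exp(iθ_k/2). Let φ = (1/√2)(|1…1⟩ + i|2…2⟩) and ψ = (1/√2)(|3…3⟩ + i|4…4⟩) in (ℂ⁴)^{⊗n}. Then for all M₁ ∈ 𝔏_{θ₁},…, M_n ∈ 𝔏_{θ_n} and X = M₁ ⊗ ⋯ ⊗ M_n: ⟨ψ|X|φ⟩ = 0 and ⟨φ|X|φ⟩ = ⟨ψ|X|ψ⟩. -/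
open Matrix Complex Finset

/-- The `n`-fold tensor (Kronecker) product of matrices, realized on the index
type `Fin n → Fin 4`. -/
def tensorProd {n : ℕ} (M : Fin n → Matrix (Fin 4) (Fin 4) ℂ) :
    Matrix (Fin n → Fin 4) (Fin n → Fin 4) ℂ :=
  fun i j => ∏ k, M k (i k) (j k)

lemma vec_split {ι : Type*} [DecidableEq ι] (p q : ι) (hpq : p ≠ q) (α β : ℂ) :
    (fun v => if v = p then α else if v = q then β else 0)
      = α • (Pi.single p 1 : ι → ℂ) + β • (Pi.single q 1 : ι → ℂ) := by
  funext v
  by_cases h1 : v = p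
  · subst h1; simp [Pi.single_apply, hpq]
  · by_cases h2 : v = q
    · subst h2; simp [Pi.single_apply, h1, Ne.symm hpq]
    · simp [h1, h2, Pi.single_apply]

lemma star_single {ι : Type*} [DecidableEq ι] (p : ι) :
    star (Pi.single p 1 : ι → ℂ) = (Pi.single p 1 : ι → ℂ) := by
  funext v; simp [Pi.single_apply]

lemma dot_expand {ι : Type*} [Fintype ι] [DecidableEq ι] (p q r s : ι)
    (hpq : p ≠ q) (hrs : r ≠ s) (α β γ δ : ℂ) (X : Matrix ι ι ℂ) :
    star (fun v => if v = p then α else if v = q then β else 0) ⬝ᵥ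
      X.mulVec (fun v => if v = r then γ else if v = s then δ else 0)
    = (starRingEnd ℂ) α * γ * X p r + (starRingEnd ℂ) α * δ * X p s
      + (starRingEnd ℂ) β * γ * X q r + (starRingEnd ℂ) β * δ * X q s := by
  rw [vec_split p q hpq, vec_split r s hrs]
  simp [star_add, star_smul, star_single, mulVec_add, mulVec_smul,
    add_dotProduct, smul_dotProduct, dotProduct_add, dotProduct_smul,
    mulVec_single, dotProduct_single, single_dotProduct, smul_eq_mul]
  ring

theorem stmt_10 (n : ℕ) (θ : Fin n → ℝ)
    (hθ : ∀ k, θ k ∈ Set.Ioc (-Real.pi) Real.pi)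
    (hsum : ∃ m : ℤ, ∑ k, θ k = Real.pi + 2 * Real.pi * m)
    (φ ψ : (Fin n → Fin 4) → ℂ)
    (hφ : φ = fun v => if v = fun _ => 0 then (1 / Real.sqrt 2 : ℂ)
      else if v = fun _ => 1 then Complex.I / Real.sqrt 2 else 0)
    (hψ : ψ = fun v => if v = fun _ => 2 then (1 / Real.sqrt 2 : ℂ)
      else if v = fun _ => 3 then Complex.I / Real.sqrt 2 else 0) :
    ∀ M : Fin n → Matrix (Fin 4) (Fin 4) ℂ, (∀ k, M k ∈ Lset (θ k)) →
      star ψ ⬝ᵥ (tensorProd M).mulVec φ = 0 ∧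
      star φ ⬝ᵥ (tensorProd M).mulVec φ = star ψ ⬝ᵥ (tensorProd M).mulVec ψ := by
  intro M hM
  -- n = 0 is impossible
  rcases Nat.eq_zero_or_pos n with hn | hn
  · exfalso
    obtain ⟨m, hm⟩ := hsum
    subst hn
    simp at hm
    have h2 : (0:ℝ) = Real.pi * (1 + 2 * m) := by linarith [hm]
    have := Real.pi_ne_zero
    have h3 : (1 + 2 * (m:ℝ)) = 0 := by
      rcases mul_eq_zero.1 h2.symm with h | h
      · exact absurd h this
      · exact h
    have h4 : (1 + 2 * m : ℤ) = 0 := by exact_mod_cast h3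
    omega
  -- distinctness of constant vectors
  have hne : ∀ i j : Fin 4, i ≠ j →
      (fun _ : Fin n => i) ≠ (fun _ : Fin n => j) := by
    intro i j hij h
    exact hij (congrFun h ⟨0, hn⟩)
  choose a b c d hMk using hM
  set γ : Fin n → ℂ := fun k => Complex.exp (Complex.I * θ k / 2) with hγ
  have e00 : ∀ k, M k 0 0 = a k := by intro k; rw [hMk k]; rfl
  have e01 : ∀ k, M k 0 1 = b k := by intro k; rw [hMk k]; rfl
  have e10 : ∀ k, M k 1 0 = b k := by intro k; rw [hMk k]; rfl
  have e11 : ∀ k, M k 1 1 = a k := by intro k; rw [hMk k]; rfl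
  have e22 : ∀ k, M k 2 2 = a k := by intro k; rw [hMk k]; rfl
  have e23 : ∀ k, M k 2 3 = b k := by intro k; rw [hMk k]; rfl
  have e32 : ∀ k, M k 3 2 = b k := by intro k; rw [hMk k]; rfl
  have e33 : ∀ k, M k 3 3 = a k := by intro k; rw [hMk k]; rfl
  have e20 : ∀ k, M k 2 0 = (starRingEnd ℂ) (γ k) * c k := by intro k; rw [hMk k]; rfl
  have e21 : ∀ k, M k 2 1 = d k := by intro k; rw [hMk k]; rfl
  have e30 : ∀ k, M k 3 0 = d k := by intro k; rw [hMk k]; rfl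
  have e31 : ∀ k, M k 3 1 = γ k * c k := by intro k; rw [hMk k]; rfl
  set G : ℂ := ∏ k, γ k with hG
  set P : ℂ := ∏ k, c k with hP
  set A : ℂ := ∏ k, a k with hA
  set B : ℂ := ∏ k, b k with hB
  set D : ℂ := ∏ k, d k with hD
  -- G = I * (-1)^m
  obtain ⟨m, hm⟩ := hsum
  have hGval : G = Complex.I * (-1 : ℂ) ^ m := by
    have h1 : G = Complex.exp (∑ k, Complex.I * (θ k : ℂ) / 2) := by
      rw [hG, Complex.exp_sum]
    have h2 : (∑ k, Complex.I * (θ k : ℂ) / 2)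
        = (Real.pi : ℂ) / 2 * Complex.I + (m : ℂ) * ((Real.pi : ℂ) * Complex.I) := by
      rw [← Finset.sum_div, ← Finset.mul_sum, ← Complex.ofReal_sum, hm]
      push_cast
      ring
    rw [h1, h2, Complex.exp_add, Complex.exp_int_mul, Complex.exp_pi_mul_I,
      Complex.exp_mul_I, Complex.cos_pi_div_two, Complex.sin_pi_div_two]
    push_cast
    ring
  have hGconj : (starRingEnd ℂ) G = - G := by
    rw [hGval, _root_.map_mul, Complex.conj_I, map_zpow₀, map_neg, _root_.map_one]
    ring
  -- matrix entries of the tensor product at constant vectors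
  have hX : ∀ i j : Fin 4, tensorProd M (fun _ => i) (fun _ => j) = ∏ k, M k i j := by
    intro i j; rfl
  have hX20 : tensorProd M (fun _ => (2:Fin 4)) (fun _ => 0) = (starRingEnd ℂ) G * P := by
    rw [hX]; simp only [e20]
    rw [Finset.prod_mul_distrib, ← map_prod]
  have hX21 : tensorProd M (fun _ => (2:Fin 4)) (fun _ => 1) = D := by
    rw [hX]; simp only [e21, hD]
  have hX30 : tensorProd M (fun _ => (3:Fin 4)) (fun _ => 0) = D := by
    rw [hX]; simp only [e30, hD]
  have hX31 : tensorProd M (fun _ => (3:Fin 4)) (fun _ => 1) = G * P := by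
    rw [hX]; simp only [e31]
    rw [Finset.prod_mul_distrib]
  have hX00 : tensorProd M (fun _ => (0:Fin 4)) (fun _ => 0) = A := by
    rw [hX]; simp only [e00, hA]
  have hX01 : tensorProd M (fun _ => (0:Fin 4)) (fun _ => 1) = B := by
    rw [hX]; simp only [e01, hB]
  have hX10 : tensorProd M (fun _ => (1:Fin 4)) (fun _ => 0) = B := by
    rw [hX]; simp only [e10, hB]
  have hX11 : tensorProd M (fun _ => (1:Fin 4)) (fun _ => 1) = A := by
    rw [hX]; simp only [e11, hA]
  have hX22 : tensorProd M (fun _ => (2:Fin 4)) (fun _ => 2) = A := by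
    rw [hX]; simp only [e22, hA]
  have hX23 : tensorProd M (fun _ => (2:Fin 4)) (fun _ => 3) = B := by
    rw [hX]; simp only [e23, hB]
  have hX32 : tensorProd M (fun _ => (3:Fin 4)) (fun _ => 2) = B := by
    rw [hX]; simp only [e32, hB]
  have hX33 : tensorProd M (fun _ => (3:Fin 4)) (fun _ => 3) = A := by
    rw [hX]; simp only [e33, hA]
  have hconj1 : (starRingEnd ℂ) ((1 : ℂ) / Real.sqrt 2) = 1 / Real.sqrt 2 := by
    simp [map_div₀, Complex.conj_ofReal]
  have hconjI : (starRingEnd ℂ) (Complex.I / Real.sqrt 2) = -Complex.I / Real.sqrt 2 := by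
    simp [map_div₀, Complex.conj_ofReal, Complex.conj_I]
  constructor
  · rw [hψ, hφ, dot_expand _ _ _ _ (hne 2 3 (by decide)) (hne 0 1 (by decide)),
      hX20, hX21, hX30, hX31, hconj1, hconjI, hGconj]
    ring_nf
    rw [Complex.I_sq]
    ring
  · rw [hψ, hφ, dot_expand _ _ _ _ (hne 0 1 (by decide)) (hne 0 1 (by decide)),
      dot_expand _ _ _ _ (hne 2 3 (by decide)) (hne 2 3 (by decide)),
      hX00, hX01, hX10, hX11, hX22, hX23, hX32, hX33]
end

section
/- Let β = min{3/16, ‖T‖/4} and α = 1 − 3β for a Hermitian 4×4 matrix T with ‖T‖ ≤ 2, and define Ã₁ = diag(α,β,β,β) − ((α−β)/4)T, Ã₂ = diag(β,α,β,β) − ((α−β)/4)T, Ã₃ = diag(β,β,α,β) + ((α−β)/4)T, Ã₄ = diag(β,β,β,α) + ((α−β)/4)T. Then each Ã_i is positive semidefinite and Ã₁ + Ã₂ + Ã₃ + Ã₄ = I₄. -/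
/-!
Each `Ãᵢ` has the form `diagonal d + c • T` with `c = ±(α - β)/4` and every `dᵢ ∈ {α, β}`, `β ≤ α`.
In the C⋆-algebra of matrices with the L2 operator norm a Hermitian `T` satisfies
`-‖T‖ • 1 ≤ T`, so `Ãᵢ ≥ (β - |c| ‖T‖) • 1`, and the choice of `β` makes `|c| ‖T‖ ≤ β`.
-/

open Matrix
open scoped Matrix.Norms.L2Operator ComplexOrder MatrixOrder

namespace Matrix

variable {n : Type*} [Fintype n] [DecidableEq n]

theorem IsHermitian.neg_norm_smul_one_le {T : Matrix n n ℂ} (hT : T.IsHermitian) :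
    -((‖T‖ : ℂ) • 1) ≤ T := by
  simpa [Algebra.algebraMap_eq_smul_one] using hT.isSelfAdjoint.neg_algebraMap_norm_le_self

theorem IsHermitian.posSemidef_diagonal_add_smul {T : Matrix n n ℂ} (hT : T.IsHermitian)
    {d : n → ℂ} {c : ℝ} (hd : ∀ i, ((|c| * ‖T‖ : ℝ) : ℂ) ≤ d i) :
    (diagonal d + (c : ℂ) • T).PosSemidef := by
  have hcT : -(((|c| * ‖T‖ : ℝ) : ℂ) • 1) ≤ (c : ℂ) • T := by
    simpa [norm_smul] using (hT.smul (k := (c : ℂ)) (Complex.conj_ofReal c)).neg_norm_smul_one_le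
  have hdiag : ((|c| * ‖T‖ : ℝ) : ℂ) • (1 : Matrix n n ℂ) ≤ diagonal d := by
    rw [le_iff, ← diagonal_one, ← diagonal_smul, diagonal_sub, posSemidef_diagonal_iff]
    simpa [Pi.le_def, sub_nonneg] using hd
  simpa [nonneg_iff_posSemidef] using add_le_add hdiag hcT

end Matrix

-- With `β = min (3/16) (t/4)` and `α = 1 - 3β`, the left side is `|(α - β)/4| * t`.
theorem abs_one_sub_four_mul_min_mul_le {t : ℝ} (ht₀ : 0 ≤ t) (ht₂ : t ≤ 2) :
    |(1 - 4 * min (3 / 16) (t / 4)) / 4| * t ≤ min (3 / 16) (t / 4) := by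
  rcases le_total (3 / 16) (t / 4) with h | h
  · rw [min_eq_left h]; norm_num; linarith
  · rw [min_eq_right h]
    have : |(1 - 4 * (t / 4)) / 4| ≤ 1 / 4 := abs_le.mpr ⟨by linarith, by linarith⟩
    nlinarith

theorem stmt_18 (T : Matrix (Fin 4) (Fin 4) ℂ)
    (hT : T.IsHermitian) (hTnorm : ‖T‖ ≤ 2)
    (β : ℝ) (hβ : β = min (3 / 16) (‖T‖ / 4))
    (α : ℝ) (hα : α = 1 - 3 * β)
    (A₁ A₂ A₃ A₄ : Matrix (Fin 4) (Fin 4) ℂ)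
    (hA₁ : A₁ = Matrix.diagonal ![(α : ℂ), β, β, β] - (((α - β) / 4 : ℝ) : ℂ) • T)
    (hA₂ : A₂ = Matrix.diagonal ![(β : ℂ), α, β, β] - (((α - β) / 4 : ℝ) : ℂ) • T)
    (hA₃ : A₃ = Matrix.diagonal ![(β : ℂ), β, α, β] + (((α - β) / 4 : ℝ) : ℂ) • T)
    (hA₄ : A₄ = Matrix.diagonal ![(β : ℂ), β, β, α] + (((α - β) / 4 : ℝ) : ℂ) • T) :
    A₁.PosSemidef ∧ A₂.PosSemidef ∧ A₃.PosSemidef ∧ A₄.PosSemidef ∧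
      A₁ + A₂ + A₃ + A₄ = 1 := by
  set c : ℝ := (α - β) / 4
  have hβ_bound : |c| * ‖T‖ ≤ β := by
    have := abs_one_sub_four_mul_min_mul_le (norm_nonneg T) hTnorm
    rwa [← hβ, show 1 - 4 * β = α - β by rw [hα]; ring] at this
  have hβα : β ≤ α := by
    have : β ≤ 3 / 16 := hβ ▸ min_le_left _ _
    linarith
  have hβ' : ((|c| * ‖T‖ : ℝ) : ℂ) ≤ β := by exact_mod_cast hβ_bound
  have hα' : ((|c| * ‖T‖ : ℝ) : ℂ) ≤ α := by exact_mod_cast hβ_bound.trans hβα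
  have hpsd (d : Fin 4 → ℂ) (hd : ∀ i, d i = α ∨ d i = β) (c' : ℝ) (hc' : |c'| = |c|) :
      (diagonal d + (c' : ℂ) • T).PosSemidef :=
    hT.posSemidef_diagonal_add_smul fun i => hc' ▸ (hd i).elim (· ▸ hα') (· ▸ hβ')
  have hneg (d : Fin 4 → ℂ) : diagonal d - (c : ℂ) • T = diagonal d + ((-c : ℝ) : ℂ) • T := by
    rw [Complex.ofReal_neg, neg_smul, sub_eq_add_neg]
  refine ⟨?_, ?_, ?_, ?_, ?_⟩
  · rw [hA₁, hneg]; exact hpsd _ (fun i => by fin_cases i <;> simp) _ (abs_neg c)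
  · rw [hA₂, hneg]; exact hpsd _ (fun i => by fin_cases i <;> simp) _ (abs_neg c)
  · rw [hA₃]; exact hpsd _ (fun i => by fin_cases i <;> simp) _ rfl
  · rw [hA₄]; exact hpsd _ (fun i => by fin_cases i <;> simp) _ rfl
  · rw [hA₁, hA₂, hA₃, hA₄]
    ext i j
    fin_cases i <;> fin_cases j <;> simp [one_apply, hα] <;> ring
end
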